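/- Asymptotic continuity of the freely measured relative entropy of entanglement: let AB be a bipartite system of minimum local dimension d=min{|A|,|B|}<∞, and let ρ,ω be states on AB with trace distance ε=(1/2)‖ρ−ω‖₁. Then for 𝒦∈{SEP,PPT} and any set 𝕂 of measurements, |D_𝒦^𝕂(ρ) − D_𝒦^𝕂(ω)| ≤ ε log₂ d + g(ε), where g(x)=(1+x)log₂(1+x) − x log₂ x. -/

import Mathlib

open scoped BigOperators Kronecker ENNReal Matrix ComplexOrder Classical
open Filter

noncomputable section

namespace QIT

/-! ## States, trace norm, partial traces -/

/-- A quantum state: a positive semidefinite, unit-trace operator. -/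
def IsState {n : Type} [Fintype n] (ρ : Matrix n n ℂ) : Prop :=
  ρ.PosSemidef ∧ ρ.trace = 1

/-- The trace norm `‖M‖₁ = Tr √(MᴴM)`. -/
def traceNorm {n : Type} [Fintype n] [DecidableEq n] (M : Matrix n n ℂ) : ℝ :=
  (((Matrix.posSemidef_conjTranspose_mul_self M).1.eigenvectorUnitary : Matrix n n ℂ) *
    Matrix.diagonal (fun i => ((Real.sqrt ((Matrix.posSemidef_conjTranspose_mul_self M).1.eigenvalues i) : ℝ) : ℂ)) *
    (star (Matrix.posSemidef_conjTranspose_mul_self M).1.eigenvectorUnitary : Matrix n n ℂ)).trace.re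

/-- Partial trace over the second tensor factor. -/
def ptraceRight {a b : Type} [Fintype b] (ρ : Matrix (a × b) (a × b) ℂ) :
    Matrix a a ℂ := fun i j => ∑ k, ρ (i, k) (j, k)

/-- Partial trace over the first tensor factor. -/
def ptraceLeft {a b : Type} [Fintype a] (ρ : Matrix (a × b) (a × b) ℂ) :
    Matrix b b ℂ := fun i j => ∑ k, ρ (k, i) (k, j)

/-- Partial transpose on the second factor. -/
def ptB {a b : Type} (ρ : Matrix (a × b) (a × b) ℂ) : Matrix (a × b) (a × b) ℂ :=
  fun p q => ρ (p.1, q.2) (q.1, p.2)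

/-- A state is PPT when its partial transpose is positive semidefinite. -/
def IsPPT {a b : Type} [Fintype a] [Fintype b] (ρ : Matrix (a × b) (a × b) ℂ) : Prop :=
  (ptB ρ).PosSemidef

/-- Membership in the separable cone: a finite sum of Kronecker products of PSD operators. -/
def InSepCone {a b : Type} [Fintype a] [Fintype b] (M : Matrix (a × b) (a × b) ℂ) : Prop :=
  ∃ (k : ℕ) (x : Fin k → Matrix a a ℂ) (y : Fin k → Matrix b b ℂ),
    (∀ i, (x i).PosSemidef) ∧ (∀ i, (y i).PosSemidef) ∧ M = ∑ i, x i ⊗ₖ y i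

/-- Membership in the PPT cone. -/
def InPPTCone {a b : Type} [Fintype a] [Fintype b] (M : Matrix (a × b) (a × b) ℂ) : Prop :=
  M.PosSemidef ∧ (ptB M).PosSemidef

/-- `n`-fold tensor power of a bipartite operator, with all `A` factors grouped together
and all `B` factors grouped together (the `Aⁿ : Bⁿ` cut). -/
def bpow {a b : Type} [Fintype a] [Fintype b] (ρ : Matrix (a × b) (a × b) ℂ) (n : ℕ) :
    Matrix ((Fin n → a) × (Fin n → b)) ((Fin n → a) × (Fin n → b)) ℂ :=
  fun p q => ∏ i, ρ (p.1 i, p.2 i) (q.1 i, q.2 i)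

/-- The maximally entangled state `Φ_d` of local dimension `d`. -/
def phi (d : ℕ) : Matrix (Fin d × Fin d) (Fin d × Fin d) ℂ :=
  fun p q => if p.1 = p.2 ∧ q.1 = q.2 then ((d : ℂ))⁻¹ else 0

/-! ## Channels -/

/-- A quantum channel (CPTP map), via the Choi–Kraus representation. -/
def IsCPTP {m n : Type} [Fintype m] [DecidableEq m] [Fintype n]
    (Λ : Matrix m m ℂ → Matrix n n ℂ) : Prop :=
  ∃ (k : ℕ) (K : Fin k → Matrix n m ℂ),
    (∑ i, (K i)ᴴ * K i = 1) ∧ ∀ ρ, Λ ρ = ∑ i, K i * ρ * (K i)ᴴ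

/-- LOCC channels between bipartite systems: finite compositions of one-way rounds, in which
one party applies a (fine-grained) quantum instrument, communicates the classical outcome,
and the other party applies a channel depending on the outcome. -/
inductive IsLOCC :
    ∀ (a b a' b' : Type) [Fintype a] [DecidableEq a] [Fintype b] [DecidableEq b]
      [Fintype a'] [DecidableEq a'] [Fintype b'] [DecidableEq b'],
      (Matrix (a × b) (a × b) ℂ → Matrix (a' × b') (a' × b') ℂ) → Prop
  | oneWayA {a b a' b' : Type} [Fintype a] [DecidableEq a] [Fintype b] [DecidableEq b]
      [Fintype a'] [DecidableEq a'] [Fintype b'] [DecidableEq b']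
      (k l : ℕ) (KA : Fin k → Matrix a' a ℂ) (KB : Fin k → Fin l → Matrix b' b ℂ)
      (hA : ∑ i, (KA i)ᴴ * KA i = 1) (hB : ∀ i, ∑ j, (KB i j)ᴴ * KB i j = 1) :
      IsLOCC a b a' b' (fun ρ => ∑ i, ∑ j, (KA i ⊗ₖ KB i j) * ρ * (KA i ⊗ₖ KB i j)ᴴ)
  | oneWayB {a b a' b' : Type} [Fintype a] [DecidableEq a] [Fintype b] [DecidableEq b]
      [Fintype a'] [DecidableEq a'] [Fintype b'] [DecidableEq b']
      (k l : ℕ) (KB : Fin k → Matrix b' b ℂ) (KA : Fin k → Fin l → Matrix a' a ℂ)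
      (hB : ∑ i, (KB i)ᴴ * KB i = 1) (hA : ∀ i, ∑ j, (KA i j)ᴴ * KA i j = 1) :
      IsLOCC a b a' b' (fun ρ => ∑ i, ∑ j, (KA i j ⊗ₖ KB i) * ρ * (KA i j ⊗ₖ KB i)ᴴ)
  | comp {a b a₁ b₁ a' b' : Type} [Fintype a] [DecidableEq a] [Fintype b] [DecidableEq b]
      [Fintype a₁] [DecidableEq a₁] [Fintype b₁] [DecidableEq b₁]
      [Fintype a'] [DecidableEq a'] [Fintype b'] [DecidableEq b']
      {Λ₁ : Matrix (a × b) (a × b) ℂ → Matrix (a₁ × b₁) (a₁ × b₁) ℂ}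
      {Λ₂ : Matrix (a₁ × b₁) (a₁ × b₁) ℂ → Matrix (a' × b') (a' × b') ℂ} :
      IsLOCC a b a₁ b₁ Λ₁ → IsLOCC a₁ b₁ a' b' Λ₂ → IsLOCC a b a' b' (fun ρ => Λ₂ (Λ₁ ρ))

/-! ## Catalysts: regrouping of tensor factors -/

/-- The regrouping `(A×B)×(C×D) ≃ (A×C)×(B×D)`. -/
def sysCat (a b c d : Type) : ((a × b) × c × d) ≃ ((a × c) × b × d) :=
  Equiv.prodProdProdComm a b c d

/-- `ρ_AB ⊗ τ_CD`, regrouped so that the bipartition is `AC : BD`. -/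
def catIn {a b c d : Type} (ρ : Matrix (a × b) (a × b) ℂ) (τ : Matrix (c × d) (c × d) ℂ) :
    Matrix ((a × c) × b × d) ((a × c) × b × d) ℂ :=
  Matrix.reindex (sysCat a b c d) (sysCat a b c d) (ρ ⊗ₖ τ)

/-- Reduced state of a system+catalyst state on `(A'C)(B'D)` on the main system `A'B'`. -/
def sysOut {a c b d : Type} [Fintype c] [Fintype d]
    (X : Matrix ((a × c) × b × d) ((a × c) × b × d) ℂ) : Matrix (a × b) (a × b) ℂ :=
  ptraceRight (Matrix.reindex (sysCat a c b d) (sysCat a c b d) X)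

/-- Reduced state of a system+catalyst state on `(A'C)(B'D)` on the catalyst `CD`. -/
def catOut {a c b d : Type} [Fintype a] [Fintype b]
    (X : Matrix ((a × c) × b × d) ((a × c) × b × d) ℂ) : Matrix (c × d) (c × d) ℂ :=
  ptraceLeft (Matrix.reindex (sysCat a c b d) (sysCat a c b d) X)

/-- Tensor product `⨂ⱼ τ_{CⱼDⱼ}` of a finite family of bipartite states,
grouped as `(C₁⋯C_k) : (D₁⋯D_k)`. -/
def piKron {k : ℕ} (c d : Fin k → ℕ)
    (τ : ∀ j, Matrix (Fin (c j) × Fin (d j)) (Fin (c j) × Fin (d j)) ℂ) :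
    Matrix ((∀ j, Fin (c j)) × ∀ j, Fin (d j)) ((∀ j, Fin (c j)) × ∀ j, Fin (d j)) ℂ :=
  fun p q => ∏ j, τ j (p.1 j, p.2 j) (q.1 j, q.2 j)

/-- The marginal of a multipartite catalyst state on the pair `CⱼDⱼ`. -/
def catMarginal {k : ℕ} {c d : Fin k → ℕ} (j : Fin k)
    (X : Matrix ((∀ i, Fin (c i)) × ∀ i, Fin (d i)) ((∀ i, Fin (c i)) × ∀ i, Fin (d i)) ℂ) :
    Matrix (Fin (c j) × Fin (d j)) (Fin (c j) × Fin (d j)) ℂ :=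
  ptraceRight (Matrix.reindex
    ((Equiv.prodCongr (Equiv.piSplitAt j fun i => Fin (c i)) (Equiv.piSplitAt j fun i => Fin (d i))).trans
      (Equiv.prodProdProdComm _ _ _ _))
    ((Equiv.prodCongr (Equiv.piSplitAt j fun i => Fin (c i)) (Equiv.piSplitAt j fun i => Fin (d i))).trans
      (Equiv.prodProdProdComm _ _ _ _)) X)

/-! ## Classes of operations and catalytic transformations -/

/-- A class of free operations of bipartite entanglement theory: for each choice of
input/output systems, a predicate on maps between the corresponding matrix spaces. -/
abbrev OpClass : Type 1 :=
  ∀ (a b a' b' : Type) [Fintype a] [DecidableEq a] [Fintype b] [DecidableEq b]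
    [Fintype a'] [DecidableEq a'] [Fintype b'] [DecidableEq b'],
    (Matrix (a × b) (a × b) ℂ → Matrix (a' × b') (a' × b') ℂ) → Prop

/-- LOCC operations, as an `OpClass`. -/
def LOCCClass : OpClass := IsLOCC

/-- PPT-preserving operations: channels mapping PPT states to PPT states. -/
def PPTPClass (a b a' b' : Type) [Fintype a] [DecidableEq a] [Fintype b] [DecidableEq b]
    [Fintype a'] [DecidableEq a'] [Fintype b'] [DecidableEq b']
    (Λ : Matrix (a × b) (a × b) ℂ → Matrix (a' × b') (a' × b') ℂ) : Prop :=
  IsCPTP Λ ∧ ∀ σ, IsState σ → IsPPT σ → IsPPT (Λ σ)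

/-- Non-entangling (separability-preserving) operations. -/
def NEClass (a b a' b' : Type) [Fintype a] [DecidableEq a] [Fintype b] [DecidableEq b]
    [Fintype a'] [DecidableEq a'] [Fintype b'] [DecidableEq b']
    (Λ : Matrix (a × b) (a × b) ℂ → Matrix (a' × b') (a' × b') ℂ) : Prop :=
  IsCPTP Λ ∧ ∀ σ, IsState σ → InSepCone σ → InSepCone (Λ σ)

/-- The various kinds of catalytic assistance. -/
inductive CatKind
  | plain  -- no catalyst
  | c      -- catalyst
  | cc     -- correlated catalyst
  | mc     -- marginal catalysts
  | mcc    -- marginal correlated catalysts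

/-- `Transform F T ρ ω`: the state `ρ` can be transformed into `ω` by operations in the
class `F` assisted by catalysts of kind `T`. -/
def Transform (F : OpClass) (T : CatKind) {a b a' b' : Type}
    [Fintype a] [DecidableEq a] [Fintype b] [DecidableEq b]
    [Fintype a'] [DecidableEq a'] [Fintype b'] [DecidableEq b']
    (ρ : Matrix (a × b) (a × b) ℂ) (ω : Matrix (a' × b') (a' × b') ℂ) : Prop :=
  match T with
  | .plain => ∃ Λ, F a b a' b' Λ ∧ Λ ρ = ω
  | .c => ∃ (dc dd : ℕ) (τ : Matrix (Fin dc × Fin dd) (Fin dc × Fin dd) ℂ)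
        (Λ : Matrix ((a × Fin dc) × b × Fin dd) ((a × Fin dc) × b × Fin dd) ℂ →
             Matrix ((a' × Fin dc) × b' × Fin dd) ((a' × Fin dc) × b' × Fin dd) ℂ),
      IsState τ ∧ F (a × Fin dc) (b × Fin dd) (a' × Fin dc) (b' × Fin dd) Λ ∧
      Λ (catIn ρ τ) = catIn ω τ
  | .cc => ∃ (dc dd : ℕ) (τ : Matrix (Fin dc × Fin dd) (Fin dc × Fin dd) ℂ)
        (Λ : Matrix ((a × Fin dc) × b × Fin dd) ((a × Fin dc) × b × Fin dd) ℂ →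
             Matrix ((a' × Fin dc) × b' × Fin dd) ((a' × Fin dc) × b' × Fin dd) ℂ),
      IsState τ ∧ F (a × Fin dc) (b × Fin dd) (a' × Fin dc) (b' × Fin dd) Λ ∧
      sysOut (Λ (catIn ρ τ)) = ω ∧ catOut (Λ (catIn ρ τ)) = τ
  | .mc => ∃ (k : ℕ) (c d : Fin k → ℕ)
        (τs : ∀ j, Matrix (Fin (c j) × Fin (d j)) (Fin (c j) × Fin (d j)) ℂ)
        (Λ : Matrix ((a × ∀ j, Fin (c j)) × b × ∀ j, Fin (d j))
               ((a × ∀ j, Fin (c j)) × b × ∀ j, Fin (d j)) ℂ →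
             Matrix ((a' × ∀ j, Fin (c j)) × b' × ∀ j, Fin (d j))
               ((a' × ∀ j, Fin (c j)) × b' × ∀ j, Fin (d j)) ℂ)
        (τ' : Matrix ((∀ j, Fin (c j)) × ∀ j, Fin (d j)) ((∀ j, Fin (c j)) × ∀ j, Fin (d j)) ℂ),
      (∀ j, IsState (τs j)) ∧
      F (a × ∀ j, Fin (c j)) (b × ∀ j, Fin (d j)) (a' × ∀ j, Fin (c j)) (b' × ∀ j, Fin (d j)) Λ ∧
      Λ (catIn ρ (piKron c d τs)) = catIn ω τ' ∧ ∀ j, catMarginal j τ' = τs j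
  | .mcc => ∃ (k : ℕ) (c d : Fin k → ℕ)
        (τs : ∀ j, Matrix (Fin (c j) × Fin (d j)) (Fin (c j) × Fin (d j)) ℂ)
        (Λ : Matrix ((a × ∀ j, Fin (c j)) × b × ∀ j, Fin (d j))
               ((a × ∀ j, Fin (c j)) × b × ∀ j, Fin (d j)) ℂ →
             Matrix ((a' × ∀ j, Fin (c j)) × b' × ∀ j, Fin (d j))
               ((a' × ∀ j, Fin (c j)) × b' × ∀ j, Fin (d j)) ℂ),
      (∀ j, IsState (τs j)) ∧
      F (a × ∀ j, Fin (c j)) (b × ∀ j, Fin (d j)) (a' × ∀ j, Fin (c j)) (b' × ∀ j, Fin (d j)) Λ ∧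
      sysOut (Λ (catIn ρ (piKron c d τs))) = ω ∧
      ∀ j, catMarginal j (catOut (Λ (catIn ρ (piKron c d τs)))) = τs j

/-! ## Asymptotic rates: distillable entanglement and entanglement cost -/

/-- Achievable rates for distillation of maximally entangled two-qubit states from `ρ`. -/
def distRates (F : OpClass) (T : CatKind) {a b : Type}
    [Fintype a] [DecidableEq a] [Fintype b] [DecidableEq b]
    (ρ : Matrix (a × b) (a × b) ℂ) : Set ℝ :=
  {R | 0 ≤ R ∧ ∃ ε : ℕ → ℝ, Tendsto ε atTop (nhds 0) ∧
    ∀ n : ℕ, ∃ ω' : Matrix ((Fin ⌈R * n⌉₊ → Fin 2) × (Fin ⌈R * n⌉₊ → Fin 2))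
        ((Fin ⌈R * n⌉₊ → Fin 2) × (Fin ⌈R * n⌉₊ → Fin 2)) ℂ,
      IsState ω' ∧ Transform F T (bpow ρ n) ω' ∧
      traceNorm (ω' - bpow (phi 2) ⌈R * n⌉₊) / 2 ≤ ε n}

/-- Distillable entanglement `E_{d,F̃}(ρ) = R_F̃(ρ → Φ₂)`. -/
def Ed (F : OpClass) (T : CatKind) {a b : Type}
    [Fintype a] [DecidableEq a] [Fintype b] [DecidableEq b]
    (ρ : Matrix (a × b) (a × b) ℂ) : ℝ≥0∞ :=
  ⨆ R ∈ distRates F T ρ, ENNReal.ofReal R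

/-- Achievable rates for dilution, i.e. for the transformation `Φ₂ → ρ`. -/
def dilRates (F : OpClass) (T : CatKind) {a b : Type}
    [Fintype a] [DecidableEq a] [Fintype b] [DecidableEq b]
    (ρ : Matrix (a × b) (a × b) ℂ) : Set ℝ :=
  {R | 0 ≤ R ∧ ∃ ε : ℕ → ℝ, Tendsto ε atTop (nhds 0) ∧
    ∀ n : ℕ, ∃ ω' : Matrix ((Fin ⌈R * n⌉₊ → a) × (Fin ⌈R * n⌉₊ → b))
        ((Fin ⌈R * n⌉₊ → a) × (Fin ⌈R * n⌉₊ → b)) ℂ,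
      IsState ω' ∧ Transform F T (bpow (phi 2) n) ω' ∧
      traceNorm (ω' - bpow ρ ⌈R * n⌉₊) / 2 ≤ ε n}

/-- Entanglement cost `E_{c,F̃}(ρ) = 1 / R_F̃(Φ₂ → ρ)`. -/
def Ec (F : OpClass) (T : CatKind) {a b : Type}
    [Fintype a] [DecidableEq a] [Fintype b] [DecidableEq b]
    (ρ : Matrix (a × b) (a × b) ℂ) : ℝ≥0∞ :=
  (⨆ R ∈ dilRates F T ρ, ENNReal.ofReal R)⁻¹

/-! ## Entropic quantities -/

/-- Matrix logarithm (base 2) of a Hermitian matrix, via the spectral decomposition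
(with the convention `log 0 = 0` on the kernel); junk value `0` on non-Hermitian inputs. -/
def matLog {n : Type} [Fintype n] [DecidableEq n] (M : Matrix n n ℂ) : Matrix n n ℂ :=
  if hM : M.IsHermitian then
    (hM.eigenvectorUnitary : Matrix n n ℂ) *
      Matrix.diagonal (fun i => (Real.logb 2 (hM.eigenvalues i) : ℂ)) *
      (hM.eigenvectorUnitary : Matrix n n ℂ)ᴴ
  else 0

/-- The Umegaki relative entropy `D(ρ‖σ) = Tr ρ (log₂ ρ − log₂ σ)`, equal to `∞` when
the support of `ρ` is not contained in the support of `σ`. -/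
def relEnt {n : Type} [Fintype n] [DecidableEq n] (ρ σ : Matrix n n ℂ) : ℝ≥0∞ :=
  if ∀ v : n → ℂ, σ.mulVec v = 0 → ρ.mulVec v = 0 then
    ENNReal.ofReal ((ρ * (matLog ρ - matLog σ)).trace.re)
  else ⊤

/-- Kullback–Leibler divergence of finitely supported distributions (base 2). -/
def klDiv {ι : Type} [Fintype ι] (p q : ι → ℝ) : ℝ≥0∞ :=
  if ∀ i, q i = 0 → p i = 0 then
    ENNReal.ofReal (∑ i, p i * Real.logb 2 (p i / q i))
  else ⊤

/-- Von Neumann entropy `S(ρ) = −Tr ρ log₂ ρ`. -/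
def vnEnt {n : Type} [Fintype n] [DecidableEq n] (ρ : Matrix n n ℂ) : ℝ :=
  -(ρ * matLog ρ).trace.re

/-! ## Relative entropies of entanglement -/

/-- The two cones of free states. -/
inductive ConeKind | sep | ppt

/-- Membership in the cone specified by `κ`. -/
def inCone (κ : ConeKind) {a b : Type} [Fintype a] [Fintype b]
    (M : Matrix (a × b) (a × b) ℂ) : Prop :=
  match κ with
  | .sep => InSepCone M
  | .ppt => InPPTCone M

/-- The relative entropy of entanglement w.r.t. the cone `κ`:
`D_𝒦(ρ) = inf_{σ ∈ 𝒦¹} D(ρ‖σ)`. -/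
def DRel (κ : ConeKind) {a b : Type} [Fintype a] [DecidableEq a] [Fintype b] [DecidableEq b]
    (ρ : Matrix (a × b) (a × b) ℂ) : ℝ≥0∞ :=
  ⨅ (σ : Matrix (a × b) (a × b) ℂ) (_ : IsState σ) (_ : inCone κ σ), relEnt ρ σ

/-- Regularized relative entropy of entanglement; by tensor subadditivity of `D_𝒦` and
Fekete's lemma, the limit `lim_n (1/n) D_𝒦(ρ^{⊗n})` exists and equals the infimum. -/
def DRelReg (κ : ConeKind) {a b : Type} [Fintype a] [DecidableEq a] [Fintype b] [DecidableEq b]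
    (ρ : Matrix (a × b) (a × b) ℂ) : ℝ≥0∞ :=
  ⨅ (n : ℕ) (_ : 0 < n), ((n : ℝ≥0∞))⁻¹ * DRel κ (bpow ρ n)

/-- A POVM: finitely many PSD effects summing to the identity. -/
def IsPOVM {n : Type} [Fintype n] [DecidableEq n] {k : ℕ} (E : Fin k → Matrix n n ℂ) : Prop :=
  (∀ i, (E i).PosSemidef) ∧ ∑ i, E i = 1

/-- A POVM is LOCC-implementable if the associated measure-and-record-on-both-sides channel
is an LOCC channel. -/
def IsLOCCMeasurement {a b : Type} [Fintype a] [DecidableEq a] [Fintype b] [DecidableEq b]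
    {k : ℕ} (E : Fin k → Matrix (a × b) (a × b) ℂ) : Prop :=
  ∃ Λ : Matrix (a × b) (a × b) ℂ → Matrix (Fin k × Fin k) (Fin k × Fin k) ℂ,
    IsLOCC a b (Fin k) (Fin k) Λ ∧
    ∀ ρ, Λ ρ = Matrix.diagonal fun p => if p.1 = p.2 then ((E p.1) * ρ).trace else 0

/-- The three classes of bipartite measurements. -/
inductive MeasKind | locc | sep | ppt

/-- The defining condition for membership of a POVM in the class `μ`. -/
def measExtra (μ : MeasKind) {a b : Type} [Fintype a] [DecidableEq a] [Fintype b] [DecidableEq b]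
    {k : ℕ} (E : Fin k → Matrix (a × b) (a × b) ℂ) : Prop :=
  match μ with
  | .locc => IsLOCCMeasurement E
  | .sep => ∀ i, InSepCone (E i)
  | .ppt => ∀ i, InPPTCone (E i)

/-- The measured relative entropy of entanglement w.r.t. the cone `κ` and an arbitrary
collection `Meas` of measurements:
`D_𝒦^𝕂(ρ) = inf_{σ ∈ 𝒦¹} sup_{(E_i) ∈ 𝕂} D((Tr E_i ρ)_i ‖ (Tr E_i σ)_i)`. -/
def DMeasGen (κ : ConeKind) {a b : Type} [Fintype a] [DecidableEq a] [Fintype b] [DecidableEq b]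
    (Meas : ∀ k : ℕ, (Fin k → Matrix (a × b) (a × b) ℂ) → Prop)
    (ρ : Matrix (a × b) (a × b) ℂ) : ℝ≥0∞ :=
  ⨅ (σ : Matrix (a × b) (a × b) ℂ) (_ : IsState σ) (_ : inCone κ σ),
    ⨆ (k : ℕ) (E : Fin k → Matrix (a × b) (a × b) ℂ) (_ : IsPOVM E) (_ : Meas k E),
      klDiv (fun i => ((E i) * ρ).trace.re) (fun i => ((E i) * σ).trace.re)

/-- The `𝕂`-measured relative entropy of entanglement for `𝕂 ∈ {𝕃𝕆ℂℂ, 𝕊𝔼ℙ, ℙℙ𝕋}`. -/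
def DMeas (κ : ConeKind) (μ : MeasKind) {a b : Type}
    [Fintype a] [DecidableEq a] [Fintype b] [DecidableEq b]
    (ρ : Matrix (a × b) (a × b) ℂ) : ℝ≥0∞ :=
  DMeasGen κ (fun _k E => measExtra μ E) ρ

/-- Regularized measured relative entropy of entanglement; by (strong) superadditivity and
Fekete's lemma, the limit `lim_n (1/n) D_𝒦^𝕂(ρ^{⊗n})` exists and equals the supremum. -/
def DMeasReg (κ : ConeKind) (μ : MeasKind) {a b : Type}
    [Fintype a] [DecidableEq a] [Fintype b] [DecidableEq b]
    (ρ : Matrix (a × b) (a × b) ℂ) : ℝ≥0∞ :=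
  ⨆ (n : ℕ) (_ : 0 < n), ((n : ℝ≥0∞))⁻¹ * DMeas κ μ (bpow ρ n)

/-! ## Reductions of four-partite states -/

/-- Reduction of a state on `(A A') : (B B')` to `A : B`. -/
def redAB {a a' b b' : Type} [Fintype a'] [Fintype b']
    (ρ : Matrix ((a × a') × b × b') ((a × a') × b × b') ℂ) : Matrix (a × b) (a × b) ℂ :=
  fun p q => ∑ u, ∑ v, ρ ((p.1, u), (p.2, v)) ((q.1, u), (q.2, v))

/-- Reduction of a state on `(A A') : (B B')` to `A' : B'`. -/
def redA'B' {a a' b b' : Type} [Fintype a] [Fintype b]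
    (ρ : Matrix ((a × a') × b × b') ((a × a') × b × b') ℂ) : Matrix (a' × b') (a' × b') ℂ :=
  fun p q => ∑ i, ∑ j, ρ ((i, p.1), (j, p.2)) ((i, q.1), (j, q.2))

end QIT

namespace QIT

/-- The function `g(x) = (1+x)log₂(1+x) − x log₂ x`. -/
def gAFW (x : ℝ) : ℝ := (1 + x) * Real.logb 2 (1 + x) - x * Real.logb 2 x


end QIT

/-!
Let `P` be the positive part of `ρ - ω`, so that `ρ ≤ ω + P` and `Tr P = ε`. Pinching `P` in the
computational basis of the smaller factor yields a separable `T` with `Tr T = ε` and `P ≤ d • T`.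
If `σ` is a free state, then so is `σ' = (σ + T) / (1 + ε)`, and for every measurement the outcome
distributions `p, q, s, t, r` of `ρ, ω, σ, T, P` satisfy `p ≤ q + r` and `r ≤ d t`. Splitting the
mass of `q + r` into `p` and the excess `w = q + r - p` of total weight `ε`, the log-sum inequality
gives `D(p ‖ (s + t) / (1 + ε)) ≤ D(q ‖ s) + ε log d + g(ε)`. Taking the supremum over measurements
and then the infimum over `σ` proves one inequality; the other follows by exchanging `ρ` and `ω`.
-/

namespace Real

lemma sub_le_mul_log_div {x y : ℝ} (hx : 0 ≤ x) (hy : 0 ≤ y) (hxy : y = 0 → x = 0) :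
    x - y ≤ x * log (x / y) := by
  rcases hx.eq_or_lt with rfl | hx
  · simpa using hy
  have hy : 0 < y := hy.lt_of_ne fun h => hx.ne' (hxy h.symm)
  have h := one_sub_inv_le_log_of_pos (div_pos hx hy)
  rw [inv_div] at h
  calc x - y = x * (1 - y / x) := by field_simp
    _ ≤ x * log (x / y) := mul_le_mul_of_nonneg_left h hx.le

lemma mul_log_div_mul_eq {x y c : ℝ} (hc : c ≠ 0) (hxy : y = 0 → x = 0) :
    x * log (x / (c * y)) = x * log (x / y) - x * log c := by
  rcases eq_or_ne x 0 with rfl | hx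
  · simp
  have hy : y ≠ 0 := fun h => hx (hxy h)
  rw [div_mul_eq_div_div_swap, log_div (div_ne_zero hx hy) hc]
  ring

lemma mul_log_div_le_of_le {x x' y : ℝ} (hx : 0 ≤ x) (hxx' : x ≤ x') (hy : 0 ≤ y) :
    x * log (x / y) ≤ x * log (x' / y) := by
  rcases hx.eq_or_lt with rfl | hx
  · simp
  rcases hy.eq_or_lt with rfl | hy
  · simp
  gcongr

/-- The log-sum inequality. -/
theorem mul_log_div_le_sum_mul_log_div {ι : Type*} (s : Finset ι) {f g : ι → ℝ}
    (hf : ∀ i ∈ s, 0 ≤ f i) (hg : ∀ i ∈ s, 0 ≤ g i) (hfg : ∀ i ∈ s, g i = 0 → f i = 0) :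
    (∑ i ∈ s, f i) * log ((∑ i ∈ s, f i) / ∑ i ∈ s, g i) ≤ ∑ i ∈ s, f i * log (f i / g i) := by
  set F := ∑ i ∈ s, f i
  set G := ∑ i ∈ s, g i
  have hF0 : 0 ≤ F := Finset.sum_nonneg hf
  rcases hF0.eq_or_lt with hF | hF
  · have hf0 : ∀ i ∈ s, f i = 0 := (Finset.sum_eq_zero_iff_of_nonneg hf).mp hF.symm
    rw [← hF, zero_mul, Finset.sum_eq_zero fun i hi => by rw [hf0 i hi, zero_mul]]
  have hG : 0 < G := by
    refine (Finset.sum_nonneg hg).lt_of_ne fun hG => hF.ne' ?_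
    exact Finset.sum_eq_zero fun i hi =>
      hfg i hi ((Finset.sum_eq_zero_iff_of_nonneg hg).mp hG.symm i hi)
  have hc : F / G ≠ 0 := (div_pos hF hG).ne'
  -- Termwise `x - y ≤ x log (x / y)` with `y = (F / G) g i`; the left sides sum to zero.
  have key : ∀ i ∈ s, f i - F / G * g i ≤ f i * log (f i / g i) - f i * log (F / G) :=
    fun i hi => by
      rw [← mul_log_div_mul_eq hc (hfg i hi)]
      exact sub_le_mul_log_div (hf i hi) (mul_nonneg (div_pos hF hG).le (hg i hi))
        fun h => hfg i hi ((mul_eq_zero.mp h).resolve_left hc)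
  have hsum := Finset.sum_le_sum key
  rw [Finset.sum_sub_distrib, Finset.sum_sub_distrib, ← Finset.mul_sum, ← Finset.sum_mul,
    div_mul_cancel₀ _ hG.ne', sub_self] at hsum
  linarith

lemma add_mul_log_div_add_le {x₁ x₂ y₁ y₂ : ℝ} (hx₁ : 0 ≤ x₁) (hx₂ : 0 ≤ x₂) (hy₁ : 0 ≤ y₁)
    (hy₂ : 0 ≤ y₂) (h₁ : y₁ = 0 → x₁ = 0) (h₂ : y₂ = 0 → x₂ = 0) :
    (x₁ + x₂) * log ((x₁ + x₂) / (y₁ + y₂)) ≤ x₁ * log (x₁ / y₁) + x₂ * log (x₂ / y₂) := by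
  simpa [Fin.sum_univ_two] using mul_log_div_le_sum_mul_log_div Finset.univ
    (f := ![x₁, x₂]) (g := ![y₁, y₂]) (by simp [Fin.forall_fin_two, *])
    (by simp [Fin.forall_fin_two, *]) (by simpa [Fin.forall_fin_two] using And.intro h₁ h₂)

end Real

open scoped MatrixOrder

namespace Matrix

variable {n ι 𝕜 : Type*} [RCLike 𝕜]

theorem posSemidef_single [DecidableEq n] (j : n) : (single j j (1 : 𝕜)).PosSemidef := by
  rw [← diagonal_single, posSemidef_diagonal_iff]
  intro i
  by_cases h : i = j <;> simp [h]

def pinch [DecidableEq ι] (c : n → ι) (M : Matrix n n 𝕜) : Matrix n n 𝕜 :=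
  of fun p q => if c p = c q then M p q else 0

variable [Fintype n]

theorem trace_pinch [DecidableEq ι] (c : n → ι) (M : Matrix n n 𝕜) :
    (pinch c M).trace = M.trace := by
  simp [pinch, trace]

variable [DecidableEq n]

theorem PosSemidef.trace_mul_nonneg {A B : Matrix n n 𝕜} (hA : A.PosSemidef)
    (hB : B.PosSemidef) : 0 ≤ (A * B).trace := by
  obtain ⟨C, rfl⟩ := CStarAlgebra.nonneg_iff_eq_star_mul_self.mp hA.nonneg
  rw [mul_assoc, trace_mul_comm, star_eq_conjTranspose]
  exact (hB.mul_mul_conjTranspose_same C).trace_nonneg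

theorem IsHermitian.trace_cfc {A : Matrix n n 𝕜} (hA : A.IsHermitian) (f : ℝ → ℝ) :
    (cfc f A).trace = ∑ i, (f (hA.eigenvalues i) : 𝕜) := by
  rw [hA.cfc_eq, IsHermitian.cfc, Unitary.conjStarAlgAut_apply, trace_mul_cycle,
    Unitary.coe_star_mul_self, one_mul, trace_diagonal]
  rfl

theorem card_smul_sum_mul_mul_conjTranspose_sub_posSemidef [Fintype ι] {K : ι → Matrix n n 𝕜}
    (hK : ∑ i, K i = 1) {M : Matrix n n 𝕜} (hM : M.PosSemidef) :
    ((Fintype.card ι : 𝕜) • ∑ i, K i * M * (K i)ᴴ - M).PosSemidef := by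
  have hsq : ∑ i, ∑ j, (K i - K j) * M * (K i - K j)ᴴ =
      (2 : 𝕜) • ((Fintype.card ι : 𝕜) • ∑ i, K i * M * (K i)ᴴ - M) := by
    have hcross : ∑ i, ∑ j, K i * M * (K j)ᴴ = M := by
      simp_rw [← Finset.mul_sum, ← conjTranspose_sum, ← Finset.sum_mul, hK]
      simp
    have hcross' : ∑ i, ∑ j, K j * M * (K i)ᴴ = M := by
      rw [Finset.sum_comm]; exact hcross
    simp only [conjTranspose_sub, sub_mul, mul_sub, Finset.sum_sub_distrib, Finset.sum_const,
      Finset.card_univ, hcross, hcross', ← Nat.cast_smul_eq_nsmul 𝕜, ← Finset.smul_sum]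
    module
  have hpos : (∑ i, ∑ j, (K i - K j) * M * (K i - K j)ᴴ).PosSemidef :=
    posSemidef_sum _ fun i _ => posSemidef_sum _ fun j _ => hM.mul_mul_conjTranspose_same _
  rw [hsq] at hpos
  simpa using hpos.smul (a := (2 : 𝕜)⁻¹) (by positivity)

variable [Fintype ι] [DecidableEq ι]

theorem pinch_eq_sum (c : n → ι) (M : Matrix n n 𝕜) :
    pinch c M = ∑ i, diagonal (fun p => if c p = i then 1 else 0) * M *
      (diagonal fun p => if c p = i then 1 else 0)ᴴ := by
  ext p q
  simp [pinch, Matrix.sum_apply, diagonal_mul, mul_diagonal, diagonal_conjTranspose, ite_mul,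
    mul_ite, apply_ite (star : 𝕜 → 𝕜)]

theorem PosSemidef.card_smul_pinch_sub {M : Matrix n n 𝕜} (hM : M.PosSemidef) (c : n → ι) :
    ((Fintype.card ι : 𝕜) • pinch c M - M).PosSemidef := by
  rw [pinch_eq_sum]
  refine card_smul_sum_mul_mul_conjTranspose_sub_posSemidef ?_ hM
  ext p q
  simp [Matrix.sum_apply, diagonal_apply, one_apply]

end Matrix

namespace QIT

open Matrix Real

section Classical

lemma eq_zero_of_le_add_of_add_eq_zero {x q r s t d : ℝ} (hx : 0 ≤ x) (hr : 0 ≤ r)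
    (hs : 0 ≤ s) (ht : 0 ≤ t) (hxqr : x ≤ q + r) (hrt : r ≤ d * t) (hsq : s = 0 → q = 0)
    (hst : s + t = 0) : x = 0 := by
  obtain ⟨hs0, ht0⟩ := (add_eq_zero_iff_of_nonneg hs ht).mp hst
  have hr0 : r = 0 := le_antisymm (by simpa [ht0] using hrt) hr
  linarith [hsq hs0]

lemma mul_log_div_add_mul_log_div_le {x w q r s t d : ℝ} (hx : 0 ≤ x) (hw : 0 ≤ w)
    (hq : 0 ≤ q) (hr : 0 ≤ r) (hs : 0 ≤ s) (ht : 0 ≤ t) (hxw : x + w = q + r)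
    (hrt : r ≤ d * t) (hsq : s = 0 → q = 0) :
    x * log (x / (s + t)) + w * log (w / (s + t)) ≤ q * log (q / s) + r * log d := by
  have htr : t = 0 → r = 0 := fun h => le_antisymm (by simpa [h] using hrt) hr
  have hrd : r * log (r / t) ≤ r * log d := by
    rcases hr.eq_or_lt with rfl | hr
    · simp
    have ht : 0 < t := ht.lt_of_ne fun h => hr.ne' (htr h.symm)
    gcongr
    exact (div_le_iff₀ ht).mpr hrt
  have hx' := mul_log_div_le_of_le hx (x' := q + r) (by linarith) (add_nonneg hs ht)
  have hw' := mul_log_div_le_of_le hw (x' := q + r) (by linarith) (add_nonneg hs ht)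
  have hqr := add_mul_log_div_add_le hq hr hs ht hsq htr
  have hsplit : x * log ((q + r) / (s + t)) + w * log ((q + r) / (s + t)) =
      (q + r) * log ((q + r) / (s + t)) := by rw [← add_mul, hxw]
  linarith

variable {ι : Type*} [Fintype ι] {p q s t r : ι → ℝ} {ε d : ℝ}

lemma sum_mul_log_div_add_le (hp : ∀ i, 0 ≤ p i) (hq : ∀ i, 0 ≤ q i) (hs : ∀ i, 0 ≤ s i)
    (ht : ∀ i, 0 ≤ t i) (hr : ∀ i, 0 ≤ r i) (hps : ∑ i, p i = 1) (hqs : ∑ i, q i = 1)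
    (hss : ∑ i, s i = 1) (hts : ∑ i, t i = ε) (hrs : ∑ i, r i = ε)
    (hpq : ∀ i, p i ≤ q i + r i) (hrt : ∀ i, r i ≤ d * t i) (hsq : ∀ i, s i = 0 → q i = 0) :
    ∑ i, p i * log (p i / (s i + t i)) ≤
      ∑ i, q i * log (q i / s i) + ε * log d + (ε * log (1 + ε) - ε * log ε) := by
  have hε : 0 ≤ ε := hts ▸ Finset.sum_nonneg fun i _ => ht i
  set w : ι → ℝ := fun i => q i + r i - p i
  have hw : ∀ i, 0 ≤ w i := fun i => sub_nonneg.mpr (hpq i)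
  have hws : ∑ i, w i = ε := by
    simp only [w, Finset.sum_sub_distrib, Finset.sum_add_distrib, hqs, hrs, hps]; ring
  have hwst : ∀ i, s i + t i = 0 → w i = 0 := fun i =>
    eq_zero_of_le_add_of_add_eq_zero (hw i) (hr i) (hs i) (ht i)
      (by simp only [w]; linarith [hp i]) (hrt i) (hsq i)
  have hlogsum : ε * log (ε / (1 + ε)) ≤ ∑ i, w i * log (w i / (s i + t i)) := by
    have h := mul_log_div_le_sum_mul_log_div Finset.univ (fun i _ => hw i)
      (fun i _ => add_nonneg (hs i) (ht i)) (fun i _ => hwst i)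
    rwa [hws, Finset.sum_add_distrib, hss, hts] at h
  have hlog : ε * log (ε / (1 + ε)) = ε * log ε - ε * log (1 + ε) := by
    rcases hε.eq_or_lt with h | h
    · simp [← h]
    rw [log_div h.ne' (by linarith)]; ring
  calc ∑ i, p i * log (p i / (s i + t i))
      ≤ ∑ i, (q i * log (q i / s i) + r i * log d - w i * log (w i / (s i + t i))) :=
        Finset.sum_le_sum fun i _ => le_sub_iff_add_le.mpr <|
          mul_log_div_add_mul_log_div_le (hp i) (hw i) (hq i) (hr i) (hs i) (ht i)
            (by simp only [w]; ring) (hrt i) (hsq i)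
    _ = ∑ i, q i * log (q i / s i) + ε * log d - ∑ i, w i * log (w i / (s i + t i)) := by
        rw [Finset.sum_sub_distrib, Finset.sum_add_distrib, ← Finset.sum_mul, hrs]
    _ ≤ _ := by linarith

lemma sum_mul_logb_div_le (hp : ∀ i, 0 ≤ p i) (hq : ∀ i, 0 ≤ q i) (hs : ∀ i, 0 ≤ s i)
    (ht : ∀ i, 0 ≤ t i) (hr : ∀ i, 0 ≤ r i) (hps : ∑ i, p i = 1) (hqs : ∑ i, q i = 1)
    (hss : ∑ i, s i = 1) (hts : ∑ i, t i = ε) (hrs : ∑ i, r i = ε)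
    (hpq : ∀ i, p i ≤ q i + r i) (hrt : ∀ i, r i ≤ d * t i) (hsq : ∀ i, s i = 0 → q i = 0) :
    ∑ i, p i * logb 2 (p i / ((1 + ε)⁻¹ * (s i + t i))) ≤
      ∑ i, q i * logb 2 (q i / s i) + (ε * logb 2 d + gAFW ε) := by
  have hε : 0 ≤ ε := hts ▸ Finset.sum_nonneg fun i _ => ht i
  have hv : ∀ i, s i + t i = 0 → p i = 0 := fun i =>
    eq_zero_of_le_add_of_add_eq_zero (hp i) (hr i) (hs i) (ht i) (hpq i) (hrt i) (hsq i)
  have hlog : ∑ i, p i * log (p i / ((1 + ε)⁻¹ * (s i + t i))) ≤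
      ∑ i, q i * log (q i / s i) + ε * log d + ((1 + ε) * log (1 + ε) - ε * log ε) := by
    have hc : (1 + ε)⁻¹ ≠ 0 := inv_ne_zero (by linarith)
    simp only [mul_log_div_mul_eq hc (hv _), Finset.sum_sub_distrib, ← Finset.sum_mul, hps,
      log_inv]
    linarith [sum_mul_log_div_add_le hp hq hs ht hr hps hqs hss hts hrs hpq hrt hsq]
  simp only [logb, gAFW, mul_div_assoc', ← Finset.sum_div, ← add_div, ← sub_div]
  exact div_le_div_of_nonneg_right (by linarith) (log_nonneg one_le_two)

end Classical

section Cones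

variable {a b : Type}

lemma ptB_kronecker (x : Matrix a a ℂ) (y : Matrix b b ℂ) : ptB (x ⊗ₖ y) = x ⊗ₖ yᵀ := rfl

lemma ptB_sum {ι : Type*} (s : Finset ι) (f : ι → Matrix (a × b) (a × b) ℂ) :
    ptB (∑ i ∈ s, f i) = ∑ i ∈ s, ptB (f i) := by
  ext p q
  simp [ptB, Matrix.sum_apply]

variable [Fintype a] [Fintype b] {M N : Matrix (a × b) (a × b) ℂ}

lemma InSepCone.sum_kronecker {ι : Type*} [Fintype ι] {x : ι → Matrix a a ℂ}
    {y : ι → Matrix b b ℂ} (hx : ∀ i, (x i).PosSemidef) (hy : ∀ i, (y i).PosSemidef) :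
    InSepCone (∑ i, x i ⊗ₖ y i) := by
  let e := (Fintype.equivFin ι).symm
  exact ⟨_, x ∘ e, y ∘ e, fun i => hx _, fun i => hy _, (e.sum_comp fun i => x i ⊗ₖ y i).symm⟩

lemma InSepCone.add (hM : InSepCone M) (hN : InSepCone N) : InSepCone (M + N) := by
  obtain ⟨k, x, y, hx, hy, rfl⟩ := hM
  obtain ⟨l, x', y', hx', hy', rfl⟩ := hN
  simpa [Fintype.sum_sum_type] using InSepCone.sum_kronecker (x := Sum.elim x x')
    (y := Sum.elim y y') (by rintro (i | i) <;> simp [hx, hx'])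
    (by rintro (i | i) <;> simp [hy, hy'])

lemma InSepCone.smul {c : ℂ} (hc : 0 ≤ c) (hM : InSepCone M) : InSepCone (c • M) := by
  obtain ⟨k, x, y, hx, hy, rfl⟩ := hM
  exact ⟨k, fun i => c • x i, y, fun i => (hx i).smul hc, hy, by
    simp [Finset.smul_sum, smul_kronecker]⟩

lemma InSepCone.posSemidef (hM : InSepCone M) : M.PosSemidef := by
  obtain ⟨k, x, y, hx, hy, rfl⟩ := hM
  exact posSemidef_sum _ fun i _ => (hx i).kronecker (hy i)

lemma InSepCone.ptB_posSemidef (hM : InSepCone M) : (ptB M).PosSemidef := by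
  obtain ⟨k, x, y, hx, hy, rfl⟩ := hM
  simp only [ptB_sum, ptB_kronecker]
  exact posSemidef_sum _ fun i _ => (hx i).kronecker (hy i).transpose

lemma inCone_of_inSepCone (κ : ConeKind) (hM : InSepCone M) : inCone κ M := by
  cases κ
  exacts [hM, ⟨hM.posSemidef, hM.ptB_posSemidef⟩]

lemma inCone_add {κ : ConeKind} (hM : inCone κ M) (hN : inCone κ N) : inCone κ (M + N) := by
  cases κ
  exacts [InSepCone.add hM hN, ⟨hM.1.add hN.1, hM.2.add hN.2⟩]

lemma inCone_smul {κ : ConeKind} {c : ℂ} (hc : 0 ≤ c) (hM : inCone κ M) : inCone κ (c • M) := by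
  cases κ
  exacts [InSepCone.smul hc hM, ⟨hM.1.smul hc, hM.2.smul hc⟩]

end Cones

section Pinching

variable {a b : Type}

lemma pinch_fst_eq_sum_kronecker [Fintype a] [DecidableEq a] (M : Matrix (a × b) (a × b) ℂ) :
    pinch Prod.fst M = ∑ j, single j j 1 ⊗ₖ M.submatrix (Prod.mk j) (Prod.mk j) := by
  ext ⟨i, k⟩ ⟨i', k'⟩
  rw [Matrix.sum_apply]
  simp only [pinch, of_apply, kroneckerMap_apply, submatrix_apply, single_apply]
  rcases eq_or_ne i i' with rfl | h
  · simp
  · rw [if_neg h]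
    exact (Finset.sum_eq_zero fun j _ => by
      rw [if_neg fun hj => h (hj.1.symm.trans hj.2), zero_mul]).symm

lemma pinch_snd_eq_sum_kronecker [Fintype b] [DecidableEq b] (M : Matrix (a × b) (a × b) ℂ) :
    pinch Prod.snd M = ∑ j, M.submatrix (·, j) (·, j) ⊗ₖ single j j 1 := by
  ext ⟨i, k⟩ ⟨i', k'⟩
  rw [Matrix.sum_apply]
  simp only [pinch, of_apply, kroneckerMap_apply, submatrix_apply, single_apply]
  rcases eq_or_ne k k' with rfl | h
  · simp
  · rw [if_neg h]
    exact (Finset.sum_eq_zero fun j _ => by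
      rw [if_neg fun hj => h (hj.1.symm.trans hj.2), mul_zero]).symm

lemma exists_inSepCone_le_min_card_smul [Fintype a] [DecidableEq a] [Fintype b] [DecidableEq b]
    {P : Matrix (a × b) (a × b) ℂ} (hP : P.PosSemidef) :
    ∃ T, InSepCone T ∧ T.trace = P.trace ∧
      P ≤ ((min (Fintype.card a : ℝ) (Fintype.card b) : ℝ) : ℂ) • T := by
  rcases le_total (Fintype.card a) (Fintype.card b) with h | h
  · refine ⟨pinch Prod.fst P, ?_, trace_pinch _ _, ?_⟩
    · rw [pinch_fst_eq_sum_kronecker]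
      exact InSepCone.sum_kronecker posSemidef_single fun j => hP.submatrix _
    · rw [min_eq_left (by exact_mod_cast h), le_iff]
      exact_mod_cast hP.card_smul_pinch_sub Prod.fst
  · refine ⟨pinch Prod.snd P, ?_, trace_pinch _ _, ?_⟩
    · rw [pinch_snd_eq_sum_kronecker]
      exact InSepCone.sum_kronecker (fun j => hP.submatrix _) posSemidef_single
    · rw [min_eq_right (by exact_mod_cast h), le_iff]
      exact_mod_cast hP.card_smul_pinch_sub Prod.snd

end Pinching

section TraceNorm

variable {n : Type} [Fintype n] [DecidableEq n]

lemma traceNorm_eq_re_trace_cfc_sqrt (M : Matrix n n ℂ) :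
    traceNorm M = (cfc Real.sqrt (Mᴴ * M)).trace.re := by
  rw [IsHermitian.cfc_eq _ Real.sqrt, IsHermitian.cfc, Unitary.conjStarAlgAut_apply]
  rfl

lemma traceNorm_neg (M : Matrix n n ℂ) : traceNorm (-M) = traceNorm M := by
  simp only [traceNorm_eq_re_trace_cfc_sqrt, conjTranspose_neg, neg_mul_neg]

lemma traceNorm_eq_sum_abs_eigenvalues {A : Matrix n n ℂ} (hA : A.IsHermitian) :
    traceNorm A = ∑ i, |hA.eigenvalues i| := by
  have hsq : Aᴴ * A = cfc (fun x : ℝ => x * x) A := by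
    rw [cfc_mul (fun x : ℝ => x) (fun x => x) A, cfc_id' ℝ A, hA.eq]
  rw [traceNorm_eq_re_trace_cfc_sqrt, hsq, ← cfc_comp' Real.sqrt (fun x : ℝ => x * x) A]
  simp [Real.sqrt_mul_self_eq_abs, hA.trace_cfc]

lemma exists_posSemidef_ge {A : Matrix n n ℂ} (hA : A.IsHermitian) :
    ∃ P : Matrix n n ℂ, P.PosSemidef ∧ A ≤ P ∧ 2 * P.trace = traceNorm A + A.trace := by
  refine ⟨cfc (fun x : ℝ => max x 0) A,
    (cfc_nonneg (R := ℝ) (a := A) fun x _ => le_max_right x 0).posSemidef, ?_, ?_⟩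
  · have h : cfc (fun x : ℝ => max x 0) A - A = cfc (fun x : ℝ => max x 0 - x) A := by
      rw [cfc_sub _ _ A, cfc_id' ℝ A]
    rw [le_iff, h]
    exact (cfc_nonneg (R := ℝ) (a := A) fun x _ => by simp).posSemidef
  · have h (x : ℝ) : 2 * max x 0 = |x| + x := by
      rcases le_total x 0 with hx | hx <;> simp [hx, abs_of_nonpos, abs_of_nonneg]; ring
    rw [traceNorm_eq_sum_abs_eigenvalues hA, hA.trace_cfc, hA.trace_eq_sum_eigenvalues,
      Finset.mul_sum]
    push_cast
    rw [← Finset.sum_add_distrib]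
    exact Finset.sum_congr rfl fun i _ => by
      simpa using congrArg Complex.ofReal (h (hA.eigenvalues i))

end TraceNorm

section Measurement

variable {n : Type} [Fintype n]

lemma isState_smul_add {σ T : Matrix n n ℂ} {ε : ℝ} (hσ : IsState σ) (hT : T.PosSemidef)
    (hTtr : T.trace = ε) (hε : 0 ≤ ε) : IsState ((((1 + ε)⁻¹ : ℝ) : ℂ) • (σ + T)) := by
  refine ⟨(hσ.1.add hT).smul (Complex.zero_le_real.mpr (by positivity)), ?_⟩
  rw [trace_smul, trace_add, hσ.2, hTtr, smul_eq_mul]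
  push_cast
  field_simp

variable [DecidableEq n]

lemma re_trace_mul_le_of_le {E X Y : Matrix n n ℂ} (hE : E.PosSemidef) (hXY : X ≤ Y) :
    (E * X).trace.re ≤ (E * Y).trace.re := by
  have h := (Complex.nonneg_iff.mp (hE.trace_mul_nonneg hXY)).1
  rwa [mul_sub, trace_sub, Complex.sub_re, sub_nonneg] at h

lemma sum_re_trace_mul {k : ℕ} {E : Fin k → Matrix n n ℂ} (hE : ∑ i, E i = 1) (X : Matrix n n ℂ) :
    ∑ i, (E i * X).trace.re = X.trace.re := by
  rw [← Complex.re_sum, ← trace_sum, ← Finset.sum_mul, hE, one_mul]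

lemma klDiv_le_klDiv_add_ofReal {ι : Type} [Fintype ι] {p u q s : ι → ℝ} {c : ℝ}
    (hsupp : (∀ i, s i = 0 → q i = 0) → ∀ i, u i = 0 → p i = 0)
    (hle : (∀ i, s i = 0 → q i = 0) →
      ∑ i, p i * logb 2 (p i / u i) ≤ ∑ i, q i * logb 2 (q i / s i) + c) :
    klDiv p u ≤ klDiv q s + ENNReal.ofReal c := by
  by_cases hqs : ∀ i, s i = 0 → q i = 0
  · rw [klDiv, klDiv, if_pos (hsupp hqs), if_pos hqs]
    exact (ENNReal.ofReal_le_ofReal (hle hqs)).trans ENNReal.ofReal_add_le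
  · simp [klDiv, hqs]

lemma klDiv_le_klDiv_add_of_le {ρ ω σ T P : Matrix n n ℂ} {ε d : ℝ} (hρ : IsState ρ)
    (hω : IsState ω) (hσ : IsState σ) (hT : T.PosSemidef) (hP : P.PosSemidef)
    (hρωP : ρ ≤ ω + P) (hPT : P ≤ (d : ℂ) • T) (hPtr : P.trace = ε) (hTtr : T.trace = ε)
    {k : ℕ} {E : Fin k → Matrix n n ℂ} (hE : IsPOVM E) :
    klDiv (fun i => (E i * ρ).trace.re)
        (fun i => (E i * ((((1 + ε)⁻¹ : ℝ) : ℂ) • (σ + T))).trace.re) ≤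
      klDiv (fun i => (E i * ω).trace.re) (fun i => (E i * σ).trace.re) +
        ENNReal.ofReal (ε * logb 2 d + gAFW ε) := by
  set p := fun i => (E i * ρ).trace.re
  set q := fun i => (E i * ω).trace.re
  set s := fun i => (E i * σ).trace.re
  set t := fun i => (E i * T).trace.re
  set r := fun i => (E i * P).trace.re
  have hu : (fun i => (E i * ((((1 + ε)⁻¹ : ℝ) : ℂ) • (σ + T))).trace.re) =
      fun i => (1 + ε)⁻¹ * (s i + t i) := by
    ext i
    rw [mul_smul_comm, trace_smul, mul_add, trace_add, smul_eq_mul, Complex.re_ofReal_mul,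
      Complex.add_re]
  have nonneg {X : Matrix n n ℂ} (hX : X.PosSemidef) (i : Fin k) : 0 ≤ (E i * X).trace.re := by
    simpa using re_trace_mul_le_of_le (hE.1 i) hX.nonneg
  have total {X : Matrix n n ℂ} {c : ℝ} (hX : X.trace = c) : ∑ i, (E i * X).trace.re = c := by
    rw [sum_re_trace_mul hE.2, hX, Complex.ofReal_re]
  have hpq (i : Fin k) : p i ≤ q i + r i := by
    simpa [mul_add] using re_trace_mul_le_of_le (hE.1 i) hρωP
  have hrt (i : Fin k) : r i ≤ d * t i := by
    simpa [Complex.re_ofReal_mul] using re_trace_mul_le_of_le (hE.1 i) hPT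
  rw [hu]
  refine klDiv_le_klDiv_add_ofReal (fun hsq i hi => ?_) fun hsq =>
    sum_mul_logb_div_le (nonneg hρ.1) (nonneg hω.1) (nonneg hσ.1) (nonneg hT) (nonneg hP)
      (total hρ.2) (total hω.2) (total hσ.2) (total hTtr) (total hPtr) hpq hrt hsq
  have hε : 0 ≤ ε := by simpa [← total hTtr] using Finset.sum_nonneg fun i _ => nonneg hT i
  exact eq_zero_of_le_add_of_add_eq_zero (nonneg hρ.1 i) (nonneg hP i) (nonneg hσ.1 i)
    (nonneg hT i) (hpq i) (hrt i) (hsq i)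
    ((mul_eq_zero.mp hi).resolve_left (inv_ne_zero (by linarith)))

end Measurement

section DMeasGen

variable {a b : Type} [Fintype a] [DecidableEq a] [Fintype b] [DecidableEq b]

lemma DMeasGen_le_add_of_forall_exists (κ : ConeKind)
    (Meas : ∀ k : ℕ, (Fin k → Matrix (a × b) (a × b) ℂ) → Prop)
    {ρ ω : Matrix (a × b) (a × b) ℂ} {c : ℝ≥0∞}
    (h : ∀ σ, IsState σ → inCone κ σ → ∃ σ', IsState σ' ∧ inCone κ σ' ∧
      ∀ k (E : Fin k → Matrix (a × b) (a × b) ℂ), IsPOVM E → Meas k E →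
        klDiv (fun i => (E i * ρ).trace.re) (fun i => (E i * σ').trace.re) ≤
          klDiv (fun i => (E i * ω).trace.re) (fun i => (E i * σ).trace.re) + c) :
    DMeasGen κ Meas ρ ≤ DMeasGen κ Meas ω + c := by
  rw [DMeasGen, DMeasGen, ← tsub_le_iff_right]
  refine le_iInf fun σ => le_iInf fun hσ => le_iInf fun hκ => ?_
  rw [tsub_le_iff_right]
  obtain ⟨σ', hσ', hκ', hle⟩ := h σ hσ hκ
  refine ((iInf₂_le σ' hσ').trans (iInf_le _ hκ')).trans ?_
  refine iSup₂_le fun k E => iSup₂_le fun hE hM => (hle k E hE hM).trans ?_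
  gcongr
  exact le_iSup₂_of_le k E (le_iSup₂_of_le hE hM le_rfl)

lemma DMeasGen_le_add_traceNorm (κ : ConeKind)
    (Meas : ∀ k : ℕ, (Fin k → Matrix (a × b) (a × b) ℂ) → Prop)
    {ρ ω : Matrix (a × b) (a × b) ℂ} (hρ : IsState ρ) (hω : IsState ω) :
    DMeasGen κ Meas ρ ≤ DMeasGen κ Meas ω + ENNReal.ofReal
      (traceNorm (ρ - ω) / 2 * logb 2 (min (Fintype.card a) (Fintype.card b)) +
        gAFW (traceNorm (ρ - ω) / 2)) := by
  set ε := traceNorm (ρ - ω) / 2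
  obtain ⟨P, hP, hρωP, hPtr⟩ := exists_posSemidef_ge (hρ.1.1.sub hω.1.1)
  have hPε : P.trace = ε := by
    rw [trace_sub, hρ.2, hω.2, sub_self, add_zero] at hPtr
    simp only [ε]; push_cast; linear_combination hPtr / 2
  have hε : 0 ≤ ε := by
    simpa [hPε] using (Complex.nonneg_iff.mp hP.trace_nonneg).1
  obtain ⟨T, hTsep, hTtr, hPT⟩ := exists_inSepCone_le_min_card_smul hP
  refine DMeasGen_le_add_of_forall_exists κ Meas fun σ hσ hκ => ⟨_,
    isState_smul_add hσ hTsep.posSemidef (hTtr.trans hPε) hε,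
    inCone_smul (Complex.zero_le_real.mpr (by positivity))
      (inCone_add hκ (inCone_of_inSepCone κ hTsep)),
    fun k E hE _ => klDiv_le_klDiv_add_of_le hρ hω hσ hTsep.posSemidef hP
      (sub_le_iff_le_add'.mp hρωP) hPT hPε (hTtr.trans hPε) hE⟩

end DMeasGen

/-- Asymptotic continuity of the freely measured relative entropy of
entanglement: for a bipartite system of minimum local dimension `d`, states `ρ, ω` at trace
distance `ε`, cone `𝒦 ∈ {SEP, PPT}` and an arbitrary set `𝕂` of measurements,
`|D_𝒦^𝕂(ρ) − D_𝒦^𝕂(ω)| ≤ ε log₂ d + g(ε)` (stated as the two one-sided bounds). -/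
theorem DMeasGen_asymptotically_continuous
    (κ : ConeKind) {a b : Type} [Fintype a] [DecidableEq a] [Fintype b] [DecidableEq b]
    (Meas : ∀ k : ℕ, (Fin k → Matrix (a × b) (a × b) ℂ) → Prop)
    (ρ ω : Matrix (a × b) (a × b) ℂ) (hρ : IsState ρ) (hω : IsState ω)
    (ε : ℝ) (hε : ε = traceNorm (ρ - ω) / 2) :
    DMeasGen κ Meas ρ ≤ DMeasGen κ Meas ω +
      ENNReal.ofReal (ε * Real.logb 2 (min (Fintype.card a) (Fintype.card b)) + gAFW ε) ∧
    DMeasGen κ Meas ω ≤ DMeasGen κ Meas ρ +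
      ENNReal.ofReal (ε * Real.logb 2 (min (Fintype.card a) (Fintype.card b)) + gAFW ε) := by
  subst hε
  refine ⟨DMeasGen_le_add_traceNorm κ Meas hρ hω, ?_⟩
  rw [← traceNorm_neg, neg_sub]
  exact DMeasGen_le_add_traceNorm κ Meas hω hρ

end QIT
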